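/- lim_{t→0+} (t/Φ(t))·ψ(Φ(t)) = ∞ if and only if lim_{s→∞} √(s·f(s))·Φ^{-1}(√(s/f(s))) = ∞. -/

import Mathlib

open MeasureTheory Set Filter Topology

noncomputable section

/-- `F(t) = ∫₀ᵗ f(s) ds`. -/
noncomputable def Fint (f : ℝ → ℝ) (t : ℝ) : ℝ := ∫ s in (0:ℝ)..t, f s

/-- `W(t) = ∫ₜ^∞ F(s)^{-1/2} ds`. -/
noncomputable def Wfun (f : ℝ → ℝ) (t : ℝ) : ℝ := ∫ s in Set.Ioi t, (Fint f s) ^ (-(1:ℝ)/2)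

/-- `Φ(t) = φ(t^{-2})^{-1/2}`. -/
noncomputable def PhiFun (φ : ℝ → ℝ) (t : ℝ) : ℝ := (φ (t ^ (-(2:ℝ)))) ^ (-(1:ℝ)/2)

/-- The Keller–Osserman kernel `t ↦ (φ^{-1}(W(t)^{-2}))^{-1/2}`. -/
noncomputable def KOker (φinv f : ℝ → ℝ) (t : ℝ) : ℝ :=
  (φinv ((Wfun f t) ^ (-(2:ℝ)))) ^ (-(1:ℝ)/2)

section Aux
variable {m M : ℝ} {f : ℝ → ℝ}

lemma fint_ibp (hfC1 : ContDiff ℝ 1 f) (t : ℝ) :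
    ∫ s in (0:ℝ)..t, s * deriv f s = t * f t - Fint f t := by
  have hder : ∀ x, HasDerivAt f (deriv f x) x := fun x =>
    ((hfC1.differentiable one_ne_zero) x).hasDerivAt
  have hcd : Continuous (deriv f) := hfC1.continuous_deriv le_rfl
  have h := intervalIntegral.integral_mul_deriv_eq_deriv_mul
    (u := fun s : ℝ => s) (u' := fun _ => (1:ℝ)) (v := f) (v' := deriv f)
    (fun x _ => hasDerivAt_id x) (fun x _ => hder x)
    (intervalIntegrable_const) (hcd.intervalIntegrable 0 t)
  simp only [one_mul] at h
  rw [h]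
  simp [Fint]

lemma fint_bounds (hm : 0 < m) (hM : 0 < M) (hf0 : f 0 = 0)
    (hfC1 : ContDiff ℝ 1 f)
    (hfscal : ∀ t > 0, (1 + m) * f t ≤ t * deriv f t ∧ t * deriv f t ≤ (1 + M) * f t)
    {t : ℝ} (ht : 0 < t) :
    (2+m) * Fint f t ≤ t * f t ∧ t * f t ≤ (2+M) * Fint f t := by
  have hcf : Continuous f := hfC1.continuous
  have hcd : Continuous (deriv f) := hfC1.continuous_deriv le_rfl
  have hint1 : IntervalIntegrable (fun s => (1+m) * f s) volume 0 t :=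
    ((continuous_const.mul hcf).intervalIntegrable 0 t)
  have hint2 : IntervalIntegrable (fun s => s * deriv f s) volume 0 t :=
    ((continuous_id.mul hcd).intervalIntegrable 0 t)
  have hint3 : IntervalIntegrable (fun s => (1+M) * f s) volume 0 t :=
    ((continuous_const.mul hcf).intervalIntegrable 0 t)
  have h1 : ∫ s in (0:ℝ)..t, (1+m) * f s ≤ ∫ s in (0:ℝ)..t, s * deriv f s := by
    apply intervalIntegral.integral_mono_on ht.le hint1 hint2
    intro x hx
    rcases eq_or_lt_of_le hx.1 with h | h
    · simp [← h, hf0]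
    · exact (hfscal x h).1
  have h2 : ∫ s in (0:ℝ)..t, s * deriv f s ≤ ∫ s in (0:ℝ)..t, (1+M) * f s := by
    apply intervalIntegral.integral_mono_on ht.le hint2 hint3
    intro x hx
    rcases eq_or_lt_of_le hx.1 with h | h
    · simp [← h, hf0]
    · exact (hfscal x h).2
  rw [fint_ibp hfC1 t, intervalIntegral.integral_const_mul] at h1 h2
  have : (∫ s in (0:ℝ)..t, f s) = Fint f t := rfl
  rw [this] at h1 h2
  constructor <;> linarith

lemma fint_pos (hm : 0 < m) (hM : 0 < M) (hf0 : f 0 = 0) (hfpos : ∀ t > 0, 0 < f t)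
    (hfC1 : ContDiff ℝ 1 f)
    (hfscal : ∀ t > 0, (1 + m) * f t ≤ t * deriv f t ∧ t * deriv f t ≤ (1 + M) * f t)
    {t : ℝ} (ht : 0 < t) : 0 < Fint f t := by
  have h := (fint_bounds hm hM hf0 hfC1 hfscal ht).2
  nlinarith [hfpos t ht, mul_pos ht (hfpos t ht)]


noncomputable def gfun (f : ℝ → ℝ) (s : ℝ) : ℝ := Real.sqrt (s / f s)
noncomputable def Gd (f : ℝ → ℝ) (s : ℝ) : ℝ :=
  ((1 * f s - s * deriv f s) / (f s) ^ 2) / (2 * Real.sqrt (s / f s))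

lemma rpow_neg_half_eq {x : ℝ} (hx : 0 ≤ x) : x ^ (-(1:ℝ)/2) = 1 / Real.sqrt x := by
  rw [neg_div, Real.rpow_neg hx, Real.sqrt_eq_rpow, one_div]
  norm_num

variable {m M : ℝ} {f : ℝ → ℝ}

lemma sqrt_div_mul {s : ℝ} (hf : 0 < f s) (hs : 0 < s) :
    Real.sqrt (s / f s) * f s = Real.sqrt (s * f s) := by
  have h1 : Real.sqrt (f s) > 0 := Real.sqrt_pos.2 hf
  rw [Real.sqrt_div' s hf.le, Real.sqrt_mul hs.le]
  rw [div_mul_eq_mul_div]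
  rw [div_eq_iff h1.ne']
  nlinarith [Real.sq_sqrt hf.le, Real.sqrt_nonneg s]

lemma gfun_hasDeriv (hfpos : ∀ t > 0, 0 < f t) (hfC1 : ContDiff ℝ 1 f)
    {s : ℝ} (hs : 0 < s) : HasDerivAt (gfun f) (Gd f s) s := by
  have hf := hfpos s hs
  have hq : HasDerivAt (fun x => x / f x) ((1 * f s - s * deriv f s) / (f s) ^ 2) s :=
    (hasDerivAt_id s).div (((hfC1.differentiable one_ne_zero) s).hasDerivAt) hf.ne'
  exact hq.sqrt (by positivity)

lemma Gd_bounds (hfpos : ∀ t > 0, 0 < f t)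
    (hfscal : ∀ t > 0, (1 + m) * f t ≤ t * deriv f t ∧ t * deriv f t ≤ (1 + M) * f t)
    {s : ℝ} (hs : 0 < s) :
    m / (2 * Real.sqrt (s * f s)) ≤ -(Gd f s) ∧
    -(Gd f s) ≤ M / (2 * Real.sqrt (s * f s)) := by
  have hf := hfpos s hs
  have hD : 0 < Real.sqrt (s * f s) := Real.sqrt_pos.2 (by positivity)
  have hden : (f s) ^ 2 * (2 * Real.sqrt (s / f s)) = 2 * f s * Real.sqrt (s * f s) := by
    rw [← sqrt_div_mul hf hs]; ring
  have hGd : -(Gd f s) = (s * deriv f s - f s) / (2 * f s * Real.sqrt (s * f s)) := by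
    unfold Gd
    rw [div_div, hden, ← neg_div]
    congr 1; ring
  obtain ⟨h1, h2⟩ := hfscal s hs
  constructor
  · rw [hGd, div_le_div_iff₀ (by positivity) (by positivity)]
    nlinarith [mul_nonneg hD.le (by linarith : 0 ≤ s * deriv f s - f s - m * f s)]
  · rw [hGd, div_le_div_iff₀ (by positivity) (by positivity)]
    nlinarith [mul_nonneg hD.le (by linarith : 0 ≤ M * f s - (s * deriv f s - f s))]

lemma Fhalf_bounds (hm : 0 < m) (hM : 0 < M) (hf0 : f 0 = 0) (hfpos : ∀ t > 0, 0 < f t)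
    (hfC1 : ContDiff ℝ 1 f)
    (hfscal : ∀ t > 0, (1 + m) * f t ≤ t * deriv f t ∧ t * deriv f t ≤ (1 + M) * f t)
    {s : ℝ} (hs : 0 < s) :
    Real.sqrt (2+m) / Real.sqrt (s * f s) ≤ (Fint f s) ^ (-(1:ℝ)/2) ∧
    (Fint f s) ^ (-(1:ℝ)/2) ≤ Real.sqrt (2+M) / Real.sqrt (s * f s) := by
  have hf := hfpos s hs
  have hF := fint_pos hm hM hf0 hfpos hfC1 hfscal hs
  obtain ⟨h1, h2⟩ := fint_bounds hm hM hf0 hfC1 hfscal hs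
  have hD : 0 < Real.sqrt (s * f s) := Real.sqrt_pos.2 (by positivity)
  have hFD : 0 < Real.sqrt (Fint f s) := Real.sqrt_pos.2 hF
  rw [rpow_neg_half_eq hF.le]
  constructor
  · rw [div_le_div_iff₀ hD hFD, ← Real.sqrt_mul (by linarith : (0:ℝ) ≤ 2+m)]
    calc Real.sqrt ((2+m) * Fint f s) ≤ Real.sqrt (s * f s) := Real.sqrt_le_sqrt h1
    _ = 1 * Real.sqrt (s * f s) := (one_mul _).symm
  · rw [div_le_div_iff₀ hFD hD, one_mul, ← Real.sqrt_mul (by linarith : (0:ℝ) ≤ 2+M)]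
    exact Real.sqrt_le_sqrt h2

lemma fint_hasDeriv (hfC1 : ContDiff ℝ 1 f) (t : ℝ) : HasDerivAt (Fint f) (f t) t :=
  intervalIntegral.integral_hasDerivAt_right (hfC1.continuous.intervalIntegrable 0 t)
    (hfC1.continuous.stronglyMeasurableAtFilter _ _) hfC1.continuous.continuousAt

lemma fhalf_contOn (hm : 0 < m) (hM : 0 < M) (hf0 : f 0 = 0) (hfpos : ∀ t > 0, 0 < f t)
    (hfC1 : ContDiff ℝ 1 f)
    (hfscal : ∀ t > 0, (1 + m) * f t ≤ t * deriv f t ∧ t * deriv f t ≤ (1 + M) * f t) :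
    ContinuousOn (fun s => (Fint f s) ^ (-(1:ℝ)/2)) (Ioi 0) := by
  apply ContinuousOn.rpow_const
  · exact fun x _ => ((fint_hasDeriv hfC1 x).differentiableAt.continuousAt).continuousWithinAt
  · exact fun x hx => Or.inl (fint_pos hm hM hf0 hfpos hfC1 hfscal hx).ne'

lemma gd_contOn (hfpos : ∀ t > 0, 0 < f t) (hfC1 : ContDiff ℝ 1 f) :
    ContinuousOn (Gd f) (Ioi 0) := by
  have hcf : Continuous f := hfC1.continuous
  have hcd : Continuous (deriv f) := hfC1.continuous_deriv le_rfl
  apply ContinuousOn.div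
  · exact ContinuousOn.div
      ((continuous_const.mul hcf).continuousOn.sub
        (continuous_id.mul hcd).continuousOn)
      ((hcf.pow 2).continuousOn)
      (fun x hx => by have := hfpos x hx; positivity)
  · exact continuousOn_const.mul ((continuousOn_id.div hcf.continuousOn
      (fun x hx => (hfpos x hx).ne')).sqrt)
  · intro x hx
    have h1 : 0 < x / f x := div_pos hx (hfpos x hx)
    have : 0 < Real.sqrt (x / f x) := Real.sqrt_pos.2 h1
    positivity

lemma gfun_ftc (hfpos : ∀ t > 0, 0 < f t) (hfC1 : ContDiff ℝ 1 f)
    {t x : ℝ} (ht : 0 < t) (htx : t ≤ x) :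
    ∫ s in t..x, -(Gd f s) = gfun f t - gfun f x := by
  have huIcc : uIcc t x = Icc t x := uIcc_of_le htx
  have h : ∀ s ∈ uIcc t x, HasDerivAt (fun y => -(gfun f y)) (-(Gd f s)) s := by
    intro s hs
    rw [huIcc] at hs
    exact (gfun_hasDeriv hfpos hfC1 (lt_of_lt_of_le ht hs.1)).neg
  have hint : IntervalIntegrable (fun s => -(Gd f s)) volume t x := by
    apply ContinuousOn.intervalIntegrable
    rw [huIcc]
    exact ((gd_contOn hfpos hfC1).mono (fun s hs => lt_of_lt_of_le ht hs.1)).neg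
  rw [intervalIntegral.integral_eq_sub_of_hasDerivAt h hint]
  ring

lemma pointwise_bounds (hm : 0 < m) (hM : 0 < M) (hf0 : f 0 = 0) (hfpos : ∀ t > 0, 0 < f t)
    (hfC1 : ContDiff ℝ 1 f)
    (hfscal : ∀ t > 0, (1 + m) * f t ≤ t * deriv f t ∧ t * deriv f t ≤ (1 + M) * f t)
    {s : ℝ} (hs : 0 < s) :
    (2 * Real.sqrt (2+m) / M) * (-(Gd f s)) ≤ (Fint f s) ^ (-(1:ℝ)/2) ∧
    (Fint f s) ^ (-(1:ℝ)/2) ≤ (2 * Real.sqrt (2+M) / m) * (-(Gd f s)) := by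
  have hf := hfpos s hs
  have hD : 0 < Real.sqrt (s * f s) := Real.sqrt_pos.2 (by positivity)
  obtain ⟨hg1, hg2⟩ := Gd_bounds hfpos hfscal hs
  obtain ⟨hF1, hF2⟩ := Fhalf_bounds hm hM hf0 hfpos hfC1 hfscal hs
  have hsm : (0:ℝ) ≤ Real.sqrt (2+m) := Real.sqrt_nonneg _
  have hsM : (0:ℝ) ≤ Real.sqrt (2+M) := Real.sqrt_nonneg _
  constructor
  · calc (2 * Real.sqrt (2+m) / M) * (-(Gd f s))
        ≤ (2 * Real.sqrt (2+m) / M) * (M / (2 * Real.sqrt (s * f s))) := by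
          apply mul_le_mul_of_nonneg_left hg2 (by positivity)
      _ = Real.sqrt (2+m) / Real.sqrt (s * f s) := by field_simp
      _ ≤ (Fint f s) ^ (-(1:ℝ)/2) := hF1
  · calc (Fint f s) ^ (-(1:ℝ)/2) ≤ Real.sqrt (2+M) / Real.sqrt (s * f s) := hF2
      _ = (2 * Real.sqrt (2+M) / m) * (m / (2 * Real.sqrt (s * f s))) := by field_simp
      _ ≤ (2 * Real.sqrt (2+M) / m) * (-(Gd f s)) := by
          apply mul_le_mul_of_nonneg_left hg1 (by positivity)

lemma interval_bounds (hm : 0 < m) (hM : 0 < M) (hf0 : f 0 = 0) (hfpos : ∀ t > 0, 0 < f t)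
    (hfC1 : ContDiff ℝ 1 f)
    (hfscal : ∀ t > 0, (1 + m) * f t ≤ t * deriv f t ∧ t * deriv f t ≤ (1 + M) * f t)
    {t x : ℝ} (ht : 0 < t) (htx : t ≤ x) :
    (2 * Real.sqrt (2+m) / M) * (gfun f t - gfun f x)
      ≤ ∫ s in t..x, (Fint f s) ^ (-(1:ℝ)/2) ∧
    (∫ s in t..x, (Fint f s) ^ (-(1:ℝ)/2))
      ≤ (2 * Real.sqrt (2+M) / m) * (gfun f t - gfun f x) := by
  have huIcc : uIcc t x = Icc t x := uIcc_of_le htx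
  have hsub : Icc t x ⊆ Ioi 0 := fun s hs => lt_of_lt_of_le ht hs.1
  have hintF : IntervalIntegrable (fun s => (Fint f s) ^ (-(1:ℝ)/2)) volume t x := by
    apply ContinuousOn.intervalIntegrable
    rw [huIcc]; exact (fhalf_contOn hm hM hf0 hfpos hfC1 hfscal).mono hsub
  have hintG : ∀ c : ℝ, IntervalIntegrable (fun s => c * (-(Gd f s))) volume t x := by
    intro c
    apply ContinuousOn.intervalIntegrable
    rw [huIcc]
    exact continuousOn_const.mul (((gd_contOn hfpos hfC1).mono hsub).neg)
  have hftc : ∀ c : ℝ, ∫ s in t..x, c * (-(Gd f s)) = c * (gfun f t - gfun f x) := by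
    intro c
    rw [intervalIntegral.integral_const_mul, gfun_ftc hfpos hfC1 ht htx]
  constructor
  · rw [← hftc]
    apply intervalIntegral.integral_mono_on htx (hintG _) hintF
    exact fun s hs => (pointwise_bounds hm hM hf0 hfpos hfC1 hfscal (hsub hs)).1
  · rw [← hftc]
    apply intervalIntegral.integral_mono_on htx hintF (hintG _)
    exact fun s hs => (pointwise_bounds hm hM hf0 hfpos hfC1 hfscal (hsub hs)).2

lemma gfun_anti (hfpos : ∀ t > 0, 0 < f t) (hfC1 : ContDiff ℝ 1 f)
    (hm : 0 < m)
    (hfscal : ∀ t > 0, (1 + m) * f t ≤ t * deriv f t ∧ t * deriv f t ≤ (1 + M) * f t)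
    {t x : ℝ} (ht : 0 < t) (htx : t ≤ x) : gfun f x ≤ gfun f t := by
  have h := gfun_ftc hfpos hfC1 ht htx
  have hpos : (0:ℝ) ≤ ∫ s in t..x, -(Gd f s) := by
    apply intervalIntegral.integral_nonneg htx
    intro s hs
    have hs0 : 0 < s := lt_of_lt_of_le ht hs.1
    have := (Gd_bounds hfpos hfscal hs0).1
    have hfs := hfpos s hs0
    have hD : 0 < Real.sqrt (s * f s) := Real.sqrt_pos.2 (by positivity)
    have : 0 < m / (2 * Real.sqrt (s * f s)) := by positivity
    linarith
  rw [h] at hpos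
  linarith

lemma sqrt_mul_gfun (hfpos : ∀ t > 0, 0 < f t) {s : ℝ} (hs : 0 < s) :
    Real.sqrt (s * f s) * gfun f s = s := by
  have hf := hfpos s hs
  unfold gfun
  rw [← Real.sqrt_mul (by positivity)]
  have : s * f s * (s / f s) = s ^ 2 := by field_simp
  rw [this, Real.sqrt_sq hs.le]

lemma gfun_decay (hm : 0 < m) (hM : 0 < M) (hfpos : ∀ t > 0, 0 < f t) (hfC1 : ContDiff ℝ 1 f)
    (hfscal : ∀ t > 0, (1 + m) * f t ≤ t * deriv f t ∧ t * deriv f t ≤ (1 + M) * f t)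
    {x : ℝ} (hx : 1 ≤ x) :
    gfun f x ≤ gfun f 1 / (1 + (m/2) * Real.log x) := by
  have h01 : (0:ℝ) < 1 := one_pos
  have hftc := gfun_ftc hfpos hfC1 h01 hx
  have hlog : 0 ≤ Real.log x := Real.log_nonneg hx
  have hgx : 0 ≤ gfun f x := Real.sqrt_nonneg _
  have hptwise : ∀ s ∈ Icc (1:ℝ) x, (m * gfun f x / 2) * (1/s) ≤ -(Gd f s) := by
    intro s hs
    have hs0 : 0 < s := lt_of_lt_of_le h01 hs.1
    have hfs := hfpos s hs0
    have hD : 0 < Real.sqrt (s * f s) := Real.sqrt_pos.2 (by positivity)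
    have hgs : gfun f x ≤ gfun f s := gfun_anti hfpos hfC1 hm hfscal hs0 hs.2
    have hkey := sqrt_mul_gfun hfpos hs0
    have h1 := (Gd_bounds hfpos hfscal hs0).1
    have heq : (m * gfun f x / 2) * (1/s) = (m * gfun f x) / (2*s) := by ring
    have : (m * gfun f x / 2) * (1/s) ≤ m / (2 * Real.sqrt (s * f s)) := by
      rw [heq, div_le_div_iff₀ (by positivity) (by positivity)]
      nlinarith [mul_le_mul_of_nonneg_left hgs (le_of_lt hm), hD.le]
    linarith
  have hintG : IntervalIntegrable (fun s => -(Gd f s)) volume 1 x := by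
    apply ContinuousOn.intervalIntegrable
    rw [uIcc_of_le hx]
    exact ((gd_contOn hfpos hfC1).mono (fun s hs => lt_of_lt_of_le h01 hs.1)).neg
  have hint1 : IntervalIntegrable (fun s => (m * gfun f x / 2) * (1/s)) volume 1 x := by
    apply ContinuousOn.intervalIntegrable
    rw [uIcc_of_le hx]
    exact continuousOn_const.mul (continuousOn_const.div continuousOn_id
      (fun s hs => (lt_of_lt_of_le h01 hs.1).ne'))
  have hmono := intervalIntegral.integral_mono_on hx hint1 hintG hptwise
  rw [intervalIntegral.integral_const_mul, integral_one_div
    (by rw [uIcc_of_le hx]; intro h; exact absurd h.1 (by norm_num)), hftc, div_one] at hmono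
  have hden : 0 < 1 + (m/2) * Real.log x := by positivity
  rw [le_div_iff₀ hden]
  nlinarith

lemma gfun_to_zero (hm : 0 < m) (hM : 0 < M) (hfpos : ∀ t > 0, 0 < f t) (hfC1 : ContDiff ℝ 1 f)
    (hfscal : ∀ t > 0, (1 + m) * f t ≤ t * deriv f t ∧ t * deriv f t ≤ (1 + M) * f t) :
    Tendsto (gfun f) atTop (𝓝 0) := by
  apply squeeze_zero' (Eventually.of_forall (fun x => Real.sqrt_nonneg _))
    (eventually_atTop.2 ⟨1, fun x hx => gfun_decay hm hM hfpos hfC1 hfscal hx⟩)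
  apply Filter.Tendsto.div_atTop tendsto_const_nhds
  apply Filter.tendsto_atTop_add_const_left
  exact (Real.tendsto_log_atTop).const_mul_atTop (by positivity)

lemma wfun_tendsto (hWfin : ∀ t > 0, IntegrableOn (fun s => (Fint f s) ^ (-(1:ℝ)/2)) (Set.Ioi t))
    {t : ℝ} (ht : 0 < t) :
    Tendsto (fun x => ∫ s in t..x, (Fint f s) ^ (-(1:ℝ)/2)) atTop (𝓝 (Wfun f t)) :=
  intervalIntegral_tendsto_integral_Ioi t (hWfin t ht) tendsto_id

lemma wfun_bounds (hm : 0 < m) (hM : 0 < M) (hf0 : f 0 = 0) (hfpos : ∀ t > 0, 0 < f t)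
    (hfC1 : ContDiff ℝ 1 f)
    (hfscal : ∀ t > 0, (1 + m) * f t ≤ t * deriv f t ∧ t * deriv f t ≤ (1 + M) * f t)
    (hWfin : ∀ t > 0, IntegrableOn (fun s => (Fint f s) ^ (-(1:ℝ)/2)) (Set.Ioi t))
    {t : ℝ} (ht : 0 < t) :
    (2 * Real.sqrt (2+m) / M) * gfun f t ≤ Wfun f t ∧
    Wfun f t ≤ (2 * Real.sqrt (2+M) / m) * gfun f t := by
  have hW := wfun_tendsto hWfin ht
  have hg0 := gfun_to_zero hm hM hfpos hfC1 hfscal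
  constructor
  · have hlim : Tendsto (fun x => (2 * Real.sqrt (2+m) / M) * (gfun f t - gfun f x)) atTop
        (𝓝 ((2 * Real.sqrt (2+m) / M) * (gfun f t - 0))) :=
      (tendsto_const_nhds.sub hg0).const_mul _
    rw [sub_zero] at hlim
    apply le_of_tendsto_of_tendsto hlim hW
    filter_upwards [eventually_ge_atTop t] with x hx
    exact (interval_bounds hm hM hf0 hfpos hfC1 hfscal ht hx).1
  · apply le_of_tendsto hW
    filter_upwards [eventually_ge_atTop t] with x hx
    have h := (interval_bounds hm hM hf0 hfpos hfC1 hfscal ht hx).2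
    have hgx : 0 ≤ gfun f x := Real.sqrt_nonneg _
    have hc : (0:ℝ) ≤ 2 * Real.sqrt (2+M) / m := by positivity
    nlinarith

lemma gfun_pos (hfpos : ∀ t > 0, 0 < f t) {t : ℝ} (ht : 0 < t) : 0 < gfun f t :=
  Real.sqrt_pos.2 (div_pos ht (hfpos t ht))

lemma wfun_pos (hm : 0 < m) (hM : 0 < M) (hf0 : f 0 = 0) (hfpos : ∀ t > 0, 0 < f t)
    (hfC1 : ContDiff ℝ 1 f)
    (hfscal : ∀ t > 0, (1 + m) * f t ≤ t * deriv f t ∧ t * deriv f t ≤ (1 + M) * f t)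
    (hWfin : ∀ t > 0, IntegrableOn (fun s => (Fint f s) ^ (-(1:ℝ)/2)) (Set.Ioi t))
    {t : ℝ} (ht : 0 < t) : 0 < Wfun f t := by
  have h := (wfun_bounds hm hM hf0 hfpos hfC1 hfscal hWfin ht).1
  have := gfun_pos hfpos ht
  have hc : (0:ℝ) < 2 * Real.sqrt (2+m) / M := by positivity
  nlinarith

lemma wfun_anti (hm : 0 < m) (hM : 0 < M) (hf0 : f 0 = 0) (hfpos : ∀ t > 0, 0 < f t)
    (hfC1 : ContDiff ℝ 1 f)
    (hfscal : ∀ t > 0, (1 + m) * f t ≤ t * deriv f t ∧ t * deriv f t ≤ (1 + M) * f t)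
    (hWfin : ∀ t > 0, IntegrableOn (fun s => (Fint f s) ^ (-(1:ℝ)/2)) (Set.Ioi t))
    {a b : ℝ} (ha : 0 < a) (hab : a ≤ b) : Wfun f b ≤ Wfun f a := by
  apply MeasureTheory.setIntegral_mono_set (hWfin a ha)
  · rw [Filter.EventuallyLE]
    apply (ae_restrict_iff' measurableSet_Ioi).2
    apply ae_of_all
    intro s hs
    exact Real.rpow_nonneg (fint_pos hm hM hf0 hfpos hfC1 hfscal (lt_trans ha hs)).le _
  · exact HasSubset.Subset.eventuallyLE (Ioi_subset_Ioi hab)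

lemma wfun_to_zero (hm : 0 < m) (hM : 0 < M) (hf0 : f 0 = 0) (hfpos : ∀ t > 0, 0 < f t)
    (hfC1 : ContDiff ℝ 1 f)
    (hfscal : ∀ t > 0, (1 + m) * f t ≤ t * deriv f t ∧ t * deriv f t ≤ (1 + M) * f t)
    (hWfin : ∀ t > 0, IntegrableOn (fun s => (Fint f s) ^ (-(1:ℝ)/2)) (Set.Ioi t)) :
    Tendsto (Wfun f) atTop (𝓝 0) := by
  have hg0 : Tendsto (fun x => (2 * Real.sqrt (2+M) / m) * gfun f x) atTop (𝓝 0) := by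
    have := (gfun_to_zero hm hM hfpos hfC1 hfscal).const_mul (2 * Real.sqrt (2+M) / m)
    simpa using this
  apply squeeze_zero'
  · filter_upwards [eventually_gt_atTop 0] with x hx
    exact (wfun_pos hm hM hf0 hfpos hfC1 hfscal hWfin hx).le
  · filter_upwards [eventually_gt_atTop 0] with x hx
    exact (wfun_bounds hm hM hf0 hfpos hfC1 hfscal hWfin hx).2
  · exact hg0

section Phi
variable {φ : ℝ → ℝ} {a₁ a₂ δ₁ δ₂ : ℝ} {Φinv : ℝ → ℝ}

lemma phiFun_pos (hφpos : ∀ t > 0, 0 < φ t) {t : ℝ} (ht : 0 < t) : 0 < PhiFun φ t :=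
  Real.rpow_pos_of_pos (hφpos _ (Real.rpow_pos_of_pos ht _)) _

lemma phiFun_lt (hφpos : ∀ t > 0, 0 < φ t) (hφmono : StrictMonoOn φ (Set.Ioi 0))
    {s t : ℝ} (hs : 0 < s) (hst : s < t) : PhiFun φ s < PhiFun φ t := by
  have ht := hs.trans hst
  have h1 : t ^ (-(2:ℝ)) < s ^ (-(2:ℝ)) := Real.rpow_lt_rpow_of_neg hs hst (by norm_num)
  have h2 : φ (t ^ (-(2:ℝ))) < φ (s ^ (-(2:ℝ))) :=
    hφmono (mem_Ioi.2 (Real.rpow_pos_of_pos ht _)) (mem_Ioi.2 (Real.rpow_pos_of_pos hs _)) h1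
  exact Real.rpow_lt_rpow_of_neg (hφpos _ (Real.rpow_pos_of_pos ht _)) h2 (by norm_num)

lemma rpow_neghalf_negtwo {x : ℝ} (hx : 0 < x) : (x ^ (-(1:ℝ)/2)) ^ (-(2:ℝ)) = x := by
  rw [← Real.rpow_mul hx.le]
  norm_num

lemma rpow_negtwo_neghalf {u : ℝ} (hu : 0 < u) : (u ^ (-(2:ℝ))) ^ (-(1:ℝ)/2) = u := by
  rw [← Real.rpow_mul hu.le]
  norm_num

lemma phiFun_surj (hφpos : ∀ t > 0, 0 < φ t) (hφsurj : ∀ y > 0, ∃ t > 0, φ t = y)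
    {u : ℝ} (hu : 0 < u) : ∃ t > 0, PhiFun φ t = u := by
  obtain ⟨r, hr, hφr⟩ := hφsurj (u ^ (-(2:ℝ))) (Real.rpow_pos_of_pos hu _)
  refine ⟨r ^ (-(1:ℝ)/2), Real.rpow_pos_of_pos hr _, ?_⟩
  unfold PhiFun
  rw [rpow_neghalf_negtwo hr, hφr, rpow_negtwo_neghalf hu]

lemma phiInv_pos (hφpos : ∀ t > 0, 0 < φ t) (hφsurj : ∀ y > 0, ∃ t > 0, φ t = y)
    (hΦinv₁ : ∀ t > 0, Φinv (PhiFun φ t) = t) {u : ℝ} (hu : 0 < u) : 0 < Φinv u := by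
  obtain ⟨t, ht, h⟩ := phiFun_surj hφpos hφsurj hu
  rw [← h, hΦinv₁ t ht]
  exact ht

lemma phiInv_mono (hφpos : ∀ t > 0, 0 < φ t) (hφmono : StrictMonoOn φ (Set.Ioi 0))
    (hφsurj : ∀ y > 0, ∃ t > 0, φ t = y)
    (hΦinv₁ : ∀ t > 0, Φinv (PhiFun φ t) = t) (hΦinv₂ : ∀ t > 0, PhiFun φ (Φinv t) = t)
    {u v : ℝ} (hu : 0 < u) (hv : 0 < v) (huv : u ≤ v) : Φinv u ≤ Φinv v := by
  by_contra h
  push_neg at h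
  have := phiFun_lt hφpos hφmono (phiInv_pos hφpos hφsurj hΦinv₁ hv) h
  rw [hΦinv₂ u hu, hΦinv₂ v hv] at this
  linarith


lemma a1_le_one (hφpos : ∀ t > 0, 0 < φ t)
    (hφscal : ∀ lam ≥ (1:ℝ), ∀ t > 0,
      a₁ * lam ^ δ₁ ≤ φ (lam * t) / φ t ∧ φ (lam * t) / φ t ≤ a₂ * lam ^ δ₂) : a₁ ≤ 1 := by
  have h := (hφscal 1 le_rfl 1 one_pos).1
  rw [Real.one_rpow, one_mul, mul_one, div_self (hφpos 1 one_pos).ne'] at h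
  exact h

lemma phiInv_doubling (ha₁ : 0 < a₁) (hδ₁ : 0 < δ₁)
    (hφpos : ∀ t > 0, 0 < φ t) (hφmono : StrictMonoOn φ (Set.Ioi 0))
    (hφsurj : ∀ y > 0, ∃ t > 0, φ t = y)
    (hφscal : ∀ lam ≥ (1:ℝ), ∀ t > 0,
      a₁ * lam ^ δ₁ ≤ φ (lam * t) / φ t ∧ φ (lam * t) / φ t ≤ a₂ * lam ^ δ₂)
    (hΦinv₁ : ∀ t > 0, Φinv (PhiFun φ t) = t) (hΦinv₂ : ∀ t > 0, PhiFun φ (Φinv t) = t)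
    {c : ℝ} (hc : 1 ≤ c) {u : ℝ} (hu : 0 < u) :
    Φinv (c * u) ≤ ((c^2/a₁) ^ (1/(2*δ₁))) * Φinv u := by
  have hc2a : (1:ℝ) ≤ c^2/a₁ := by
    rw [le_div_iff₀ ha₁]
    nlinarith [a1_le_one hφpos hφscal]
  set lam := (c^2/a₁) ^ (1/(2*δ₁)) with hlamdef
  have hlam1 : 1 ≤ lam := Real.one_le_rpow hc2a (by positivity)
  have hlampos : (0:ℝ) < lam := lt_of_lt_of_le one_pos hlam1
  have ht : 0 < Φinv u := phiInv_pos hφpos hφsurj hΦinv₁ hu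
  set t := Φinv u with htdef
  have hPt : PhiFun φ t = u := hΦinv₂ u hu
  have hltpos : 0 < lam * t := by positivity
  set r := (lam*t) ^ (-(2:ℝ)) with hrdef
  have hrpos : 0 < r := Real.rpow_pos_of_pos hltpos _
  have hlam2 : (1:ℝ) ≤ lam ^ (2:ℝ) := Real.one_le_rpow hlam1 (by norm_num)
  have hsc := (hφscal (lam ^ (2:ℝ)) hlam2 r hrpos).1
  have hexp : (lam ^ (2:ℝ)) ^ δ₁ = c^2/a₁ := by
    rw [hlamdef, ← Real.rpow_mul (by positivity), ← Real.rpow_mul (by positivity)]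
    rw [show 1/(2*δ₁) * (2*δ₁) = 1 by field_simp]
    exact Real.rpow_one _
  have hmulr : lam ^ (2:ℝ) * r = t ^ (-(2:ℝ)) := by
    rw [hrdef, Real.mul_rpow hlampos.le ht.le, ← mul_assoc, ← Real.rpow_add hlampos]
    norm_num
  have hφrpos := hφpos r hrpos
  have hφtpos := hφpos _ (Real.rpow_pos_of_pos ht (-(2:ℝ)))
  have hkey : c^2 * φ r ≤ φ (t ^ (-(2:ℝ))) := by
    rw [hexp, hmulr] at hsc
    rw [show a₁ * (c^2/a₁) = c^2 by field_simp] at hsc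
    calc c^2 * φ r ≤ (φ (t^(-(2:ℝ)))/φ r) * φ r :=
          mul_le_mul_of_nonneg_right hsc hφrpos.le
    _ = φ (t^(-(2:ℝ))) := by field_simp
  have hX : 0 < Real.sqrt (φ (t^(-(2:ℝ)))) := Real.sqrt_pos.2 hφtpos
  have hY : 0 < Real.sqrt (φ r) := Real.sqrt_pos.2 hφrpos
  have hcu : c * u ≤ PhiFun φ (lam * t) := by
    rw [← hPt]
    unfold PhiFun
    rw [rpow_neg_half_eq hφtpos.le, rpow_neg_half_eq (hφpos _ hrpos).le]
    have h1 : Real.sqrt (c^2 * φ r) ≤ Real.sqrt (φ (t^(-(2:ℝ)))) := Real.sqrt_le_sqrt hkey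
    rw [Real.sqrt_mul (by positivity), Real.sqrt_sq (by linarith)] at h1
    rw [mul_one_div, div_le_div_iff₀ hX hY]
    nlinarith
  have hcupos : 0 < c * u := by positivity
  calc Φinv (c*u) ≤ Φinv (PhiFun φ (lam*t)) :=
        phiInv_mono hφpos hφmono hφsurj hΦinv₁ hΦinv₂ hcupos (phiFun_pos hφpos hltpos) hcu
  _ = lam * t := hΦinv₁ _ hltpos


lemma phiFun_le (hφpos : ∀ t > 0, 0 < φ t) (hφmono : StrictMonoOn φ (Set.Ioi 0))
    {s t : ℝ} (hs : 0 < s) (hst : s ≤ t) : PhiFun φ s ≤ PhiFun φ t := by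
  rcases eq_or_lt_of_le hst with h | h
  · rw [h]
  · exact (phiFun_lt hφpos hφmono hs h).le

lemma phiFun_to_zero (ha₁ : 0 < a₁) (hδ₁ : 0 < δ₁)
    (hφpos : ∀ t > 0, 0 < φ t) (hφmono : StrictMonoOn φ (Set.Ioi 0))
    (hφscal : ∀ lam ≥ (1:ℝ), ∀ t > 0,
      a₁ * lam ^ δ₁ ≤ φ (lam * t) / φ t ∧ φ (lam * t) / φ t ≤ a₂ * lam ^ δ₂) :
    Tendsto (PhiFun φ) (𝓝[>] (0:ℝ)) (𝓝[>] (0:ℝ)) := by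
  rw [tendsto_nhdsWithin_iff]
  constructor
  · rw [tendsto_order]
    constructor
    · intro a ha
      filter_upwards [self_mem_nhdsWithin] with x hx
      exact lt_trans ha (phiFun_pos hφpos hx)
    · intro ε hε
      -- find t₀ > 0 with PhiFun φ t₀ < ε
      have hφ1 := hφpos 1 one_pos
      set K := (ε⁻¹^2 + 1)/(a₁ * φ 1) with hKdef
      have hK : 0 < K := by positivity
      set lam := max 1 (K ^ (1/δ₁)) with hlamdef
      have hlam1 : (1:ℝ) ≤ lam := le_max_left _ _
      have hlampos : (0:ℝ) < lam := lt_of_lt_of_le one_pos hlam1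
      have hKlam : K ≤ lam ^ δ₁ := by
        have h1 : (K ^ (1/δ₁)) ^ δ₁ ≤ lam ^ δ₁ :=
          Real.rpow_le_rpow (by positivity) (le_max_right _ _) hδ₁.le
        rwa [← Real.rpow_mul hK.le, show 1/δ₁ * δ₁ = 1 by field_simp, Real.rpow_one] at h1
      have hsc := (hφscal lam hlam1 1 one_pos).1
      rw [mul_one] at hsc
      have hφlam : ε⁻¹^2 + 1 ≤ φ lam := by
        have h2 : a₁ * K ≤ a₁ * lam ^ δ₁ := mul_le_mul_of_nonneg_left hKlam ha₁.le
        have h3 : a₁ * K * φ 1 = ε⁻¹^2 + 1 := by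
          rw [hKdef]; field_simp
        have h4 : a₁ * lam ^ δ₁ * φ 1 ≤ φ lam := by
          rw [← le_div_iff₀ hφ1]
          exact hsc
        nlinarith
      set t₀ := lam ^ (-(1:ℝ)/2) with ht₀def
      have ht₀pos : 0 < t₀ := Real.rpow_pos_of_pos hlampos _
      have hPhit₀ : PhiFun φ t₀ < ε := by
        unfold PhiFun
        rw [ht₀def, rpow_neghalf_negtwo hlampos,
          rpow_neg_half_eq (hφpos lam hlampos).le]
        have h5 : ε⁻¹ < Real.sqrt (φ lam) := by
          have := Real.sqrt_lt_sqrt (by positivity : (0:ℝ) ≤ ε⁻¹^2)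
            (by linarith : ε⁻¹^2 < φ lam)
          rwa [Real.sqrt_sq (by positivity)] at this
        have h6 : (0:ℝ) < ε⁻¹ := by positivity
        calc 1 / Real.sqrt (φ lam) < 1 / ε⁻¹ := by
              apply one_div_lt_one_div_of_lt h6 h5
        _ = ε := by rw [one_div, inv_inv]
      filter_upwards [Ioo_mem_nhdsGT_of_mem (Set.left_mem_Ico.2 ht₀pos)] with x hx
      exact lt_trans (phiFun_lt hφpos hφmono hx.1 hx.2) hPhit₀
  · filter_upwards [self_mem_nhdsWithin] with x hx
    exact phiFun_pos hφpos hx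

lemma phiInv_to_zero (ha₁ : 0 < a₁) (hδ₁ : 0 < δ₁)
    (hφpos : ∀ t > 0, 0 < φ t) (hφmono : StrictMonoOn φ (Set.Ioi 0))
    (hφsurj : ∀ y > 0, ∃ t > 0, φ t = y)
    (hΦinv₁ : ∀ t > 0, Φinv (PhiFun φ t) = t) (hΦinv₂ : ∀ t > 0, PhiFun φ (Φinv t) = t) :
    Tendsto Φinv (𝓝[>] (0:ℝ)) (𝓝[>] (0:ℝ)) := by
  rw [tendsto_nhdsWithin_iff]
  constructor
  · rw [tendsto_order]
    constructor
    · intro a ha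
      filter_upwards [self_mem_nhdsWithin] with x hx
      exact lt_trans ha (phiInv_pos hφpos hφsurj hΦinv₁ hx)
    · intro ε hε
      have hPε : 0 < PhiFun φ ε := phiFun_pos hφpos hε
      filter_upwards [Ioo_mem_nhdsGT_of_mem (Set.left_mem_Ico.2 hPε)] with u hu
      by_contra h
      push_neg at h
      have h2 : PhiFun φ ε ≤ PhiFun φ (Φinv u) := phiFun_le hφpos hφmono hε h
      rw [hΦinv₂ u hu.1] at h2
      exact absurd hu.2 (not_lt.2 h2)
  · filter_upwards [self_mem_nhdsWithin] with x hx
    exact phiInv_pos hφpos hφsurj hΦinv₁ hx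

end Phi

lemma psi_to_top {ψ : ℝ → ℝ} (hm : 0 < m) (hM : 0 < M) (hf0 : f 0 = 0)
    (hfpos : ∀ t > 0, 0 < f t) (hfC1 : ContDiff ℝ 1 f)
    (hfscal : ∀ t > 0, (1 + m) * f t ≤ t * deriv f t ∧ t * deriv f t ≤ (1 + M) * f t)
    (hWfin : ∀ t > 0, IntegrableOn (fun s => (Fint f s) ^ (-(1:ℝ)/2)) (Set.Ioi t))
    (hψpos : ∀ t > 0, 0 < ψ t) (hWψ : ∀ t > 0, Wfun f (ψ t) = t) :
    Tendsto ψ (𝓝[>] (0:ℝ)) atTop := by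
  rw [tendsto_atTop]
  intro N
  have hN' : (0:ℝ) < max N 1 := lt_of_lt_of_le one_pos (le_max_right _ _)
  have hWN := wfun_pos hm hM hf0 hfpos hfC1 hfscal hWfin hN'
  filter_upwards [Ioo_mem_nhdsGT_of_mem (Set.left_mem_Ico.2 hWN)] with u hu
  by_contra h
  push_neg at h
  have hψu := hψpos u hu.1
  have h2 : Wfun f (max N 1) ≤ Wfun f (ψ u) :=
    wfun_anti hm hM hf0 hfpos hfC1 hfscal hWfin hψu (le_trans h.le (le_max_left _ _))
  rw [hWψ u hu.1] at h2
  linarith [hu.2]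

lemma tendsto_top_iff_comp {h A σ τ : ℝ → ℝ} {l : Filter ℝ}
    (hσ : Tendsto σ l atTop) (hτ : Tendsto τ atTop l)
    (h1 : ∀ᶠ t in l, h t = A (σ t)) (h2 : ∀ᶠ s in atTop, A s = h (τ s)) :
    Tendsto h l atTop ↔ Tendsto A atTop atTop := by
  constructor
  · intro H
    exact Tendsto.congr' (by filter_upwards [h2] with s hs; exact hs.symm) (H.comp hτ)
  · intro H
    exact Tendsto.congr' (by filter_upwards [h1] with t ht; exact ht.symm) (H.comp hσ)

lemma tendsto_top_of_le_mul {A B : ℝ → ℝ} {C : ℝ} (hC : 0 < C)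
    (hAB : ∀ᶠ s in atTop, A s ≤ C * B s) (hA : Tendsto A atTop atTop) :
    Tendsto B atTop atTop := by
  apply tendsto_atTop_mono' _ _ (hA.const_mul_atTop (inv_pos.2 hC))
  filter_upwards [hAB] with s hs
  rw [inv_mul_le_iff₀ hC]
  exact hs

/-- `lim_{t→0+} (t/Φ(t))·ψ(Φ(t)) = ∞` iff `lim_{s→∞} √(s·f(s))·Φ^{-1}(√(s/f(s))) = ∞`. -/
theorem boundary_blowup_rate_equivalence
    (m M : ℝ) (hm : 0 < m) (hmM : m ≤ M)
    (f : ℝ → ℝ) (hf0 : f 0 = 0) (hfnn : ∀ t, 0 ≤ f t) (hfpos : ∀ t > 0, 0 < f t)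
    (hfC1 : ContDiff ℝ 1 f) (hfmono : Monotone f)
    (hfscal : ∀ t > 0, (1 + m) * f t ≤ t * deriv f t ∧ t * deriv f t ≤ (1 + M) * f t)
    (hWfin : ∀ t > 0, IntegrableOn (fun s => (Fint f s) ^ (-(1:ℝ)/2)) (Set.Ioi t))
    (ψ : ℝ → ℝ) (hψpos : ∀ t > 0, 0 < ψ t)
    (hψW : ∀ t > 0, ψ (Wfun f t) = t) (hWψ : ∀ t > 0, Wfun f (ψ t) = t)
    (a₁ a₂ δ₁ δ₂ : ℝ) (ha₁ : 0 < a₁) (ha₂ : 0 < a₂)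
    (hδ₁ : 0 < δ₁) (hδ₁₂ : δ₁ ≤ δ₂) (hδ₂ : δ₂ < 1)
    (φ : ℝ → ℝ) (hφpos : ∀ t > 0, 0 < φ t) (hφmono : StrictMonoOn φ (Set.Ioi 0))
    (hφcont : ContinuousOn φ (Set.Ioi 0)) (hφsurj : ∀ y > 0, ∃ t > 0, φ t = y)
    (hφscal : ∀ lam ≥ (1:ℝ), ∀ t > 0,
      a₁ * lam ^ δ₁ ≤ φ (lam * t) / φ t ∧ φ (lam * t) / φ t ≤ a₂ * lam ^ δ₂)
    (Φinv : ℝ → ℝ) (hΦinv₁ : ∀ t > 0, Φinv (PhiFun φ t) = t)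
    (hΦinv₂ : ∀ t > 0, PhiFun φ (Φinv t) = t) :
    Tendsto (fun t => (t / PhiFun φ t) * ψ (PhiFun φ t)) (𝓝[>] (0:ℝ)) atTop ↔
    Tendsto (fun s => Real.sqrt (s * f s) * Φinv (Real.sqrt (s / f s))) atTop atTop := by
  have hM : 0 < M := lt_of_lt_of_le hm hmM
  have hσ : Tendsto (fun t => ψ (PhiFun φ t)) (𝓝[>] (0:ℝ)) atTop :=
    (psi_to_top hm hM hf0 hfpos hfC1 hfscal hWfin hψpos hWψ).comp
      (phiFun_to_zero ha₁ hδ₁ hφpos hφmono hφscal)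
  have hWz : Tendsto (Wfun f) atTop (𝓝[>] (0:ℝ)) := by
    rw [tendsto_nhdsWithin_iff]
    refine ⟨wfun_to_zero hm hM hf0 hfpos hfC1 hfscal hWfin, ?_⟩
    filter_upwards [eventually_gt_atTop 0] with s hs
    exact wfun_pos hm hM hf0 hfpos hfC1 hfscal hWfin hs
  have hτ : Tendsto (fun s => Φinv (Wfun f s)) atTop (𝓝[>] (0:ℝ)) :=
    (phiInv_to_zero ha₁ hδ₁ hφpos hφmono hφsurj hΦinv₁ hΦinv₂).comp hWz
  have step1 : Tendsto (fun t => (t / PhiFun φ t) * ψ (PhiFun φ t)) (𝓝[>] (0:ℝ)) atTop ↔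
      Tendsto (fun s => (Φinv (Wfun f s) / Wfun f s) * s) atTop atTop := by
    apply tendsto_top_iff_comp hσ hτ
    · filter_upwards [self_mem_nhdsWithin] with t ht
      have hΦt : 0 < PhiFun φ t := phiFun_pos hφpos ht
      rw [hWψ _ hΦt, hΦinv₁ t ht]
    · filter_upwards [eventually_gt_atTop 0] with s hs
      have hWs : 0 < Wfun f s := wfun_pos hm hM hf0 hfpos hfC1 hfscal hWfin hs
      rw [hΦinv₂ _ hWs, hψW s hs]
  rw [step1]
  -- Part 2: comparison between A and B
  set c₁ : ℝ := 2 * Real.sqrt (2+m) / M with hc₁def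
  set c₂ : ℝ := 2 * Real.sqrt (2+M) / m with hc₂def
  have hc₁ : 0 < c₁ := by rw [hc₁def]; positivity
  have hc₂ : 0 < c₂ := by rw [hc₂def]; positivity
  set c₂' : ℝ := max c₂ 1 with hc₂'def
  set e₁ : ℝ := max (1/c₁) 1 with he₁def
  have hc₂'1 : (1:ℝ) ≤ c₂' := le_max_right _ _
  have he₁1 : (1:ℝ) ≤ e₁ := le_max_right _ _
  set K₂ : ℝ := (c₂'^2/a₁) ^ (1/(2*δ₁)) with hK₂def
  set K₁ : ℝ := (e₁^2/a₁) ^ (1/(2*δ₁)) with hK₁def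
  have hc₂'pos : (0:ℝ) < c₂' := lt_of_lt_of_le one_pos hc₂'1
  have he₁pos : (0:ℝ) < e₁ := lt_of_lt_of_le one_pos he₁1
  have hK₂pos : 0 < K₂ := Real.rpow_pos_of_pos (by positivity) _
  have hK₁pos : 0 < K₁ := Real.rpow_pos_of_pos (by positivity) _
  have hAB : ∀ᶠ s in atTop, (Φinv (Wfun f s) / Wfun f s) * s ≤
      (K₂/c₁) * (Real.sqrt (s * f s) * Φinv (Real.sqrt (s / f s))) := by
    filter_upwards [eventually_gt_atTop 0] with s hs
    have hfs := hfpos s hs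
    have hg : 0 < gfun f s := gfun_pos hfpos hs
    obtain ⟨hW1, hW2⟩ := wfun_bounds hm hM hf0 hfpos hfC1 hfscal hWfin hs
    rw [← hc₁def] at hW1
    rw [← hc₂def] at hW2
    have hWs : 0 < Wfun f s := wfun_pos hm hM hf0 hfpos hfC1 hfscal hWfin hs
    have hsf : Real.sqrt (s * f s) = s / gfun f s := by
      rw [eq_div_iff hg.ne']
      exact sqrt_mul_gfun hfpos hs
    have hQ : 0 < Φinv (gfun f s) := phiInv_pos hφpos hφsurj hΦinv₁ hg
    have hc₂'g : Wfun f s ≤ c₂' * gfun f s :=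
      le_trans hW2 (mul_le_mul_of_nonneg_right (le_max_left _ _) hg.le)
    have hd : Φinv (Wfun f s) ≤ K₂ * Φinv (gfun f s) := by
      calc Φinv (Wfun f s) ≤ Φinv (c₂' * gfun f s) :=
            phiInv_mono hφpos hφmono hφsurj hΦinv₁ hΦinv₂ hWs (by positivity) hc₂'g
      _ ≤ K₂ * Φinv (gfun f s) :=
            phiInv_doubling ha₁ hδ₁ hφpos hφmono hφsurj hφscal hΦinv₁ hΦinv₂ hc₂'1 hg
    have hgB : Real.sqrt (s / f s) = gfun f s := rfl
    rw [hgB, hsf]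
    have h1 : Φinv (Wfun f s) / Wfun f s ≤ (K₂ * Φinv (gfun f s)) / (c₁ * gfun f s) :=
      div_le_div₀ (by positivity) hd (by positivity) hW1
    calc Φinv (Wfun f s) / Wfun f s * s ≤ ((K₂ * Φinv (gfun f s)) / (c₁ * gfun f s)) * s :=
          mul_le_mul_of_nonneg_right h1 hs.le
    _ = (K₂/c₁) * (s / gfun f s * Φinv (gfun f s)) := by field_simp
  have hBA : ∀ᶠ s in atTop, Real.sqrt (s * f s) * Φinv (Real.sqrt (s / f s)) ≤
      (c₂ * K₁) * ((Φinv (Wfun f s) / Wfun f s) * s) := by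
    filter_upwards [eventually_gt_atTop 0] with s hs
    have hfs := hfpos s hs
    have hg : 0 < gfun f s := gfun_pos hfpos hs
    obtain ⟨hW1, hW2⟩ := wfun_bounds hm hM hf0 hfpos hfC1 hfscal hWfin hs
    rw [← hc₁def] at hW1
    rw [← hc₂def] at hW2
    have hWs : 0 < Wfun f s := wfun_pos hm hM hf0 hfpos hfC1 hfscal hWfin hs
    have hsf : Real.sqrt (s * f s) = s / gfun f s := by
      rw [eq_div_iff hg.ne']
      exact sqrt_mul_gfun hfpos hs
    have hP : 0 < Φinv (Wfun f s) := phiInv_pos hφpos hφsurj hΦinv₁ hWs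
    have hge : gfun f s ≤ e₁ * Wfun f s := by
      have h1 : gfun f s ≤ (1/c₁) * Wfun f s := by
        rw [div_mul_eq_mul_div, le_div_iff₀ hc₁]
        linarith [hW1]
      calc gfun f s ≤ (1/c₁) * Wfun f s := h1
      _ ≤ e₁ * Wfun f s := mul_le_mul_of_nonneg_right (le_max_left _ _) hWs.le
    have hd : Φinv (gfun f s) ≤ K₁ * Φinv (Wfun f s) := by
      calc Φinv (gfun f s) ≤ Φinv (e₁ * Wfun f s) :=
            phiInv_mono hφpos hφmono hφsurj hΦinv₁ hΦinv₂ hg (by positivity) hge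
      _ ≤ K₁ * Φinv (Wfun f s) :=
            phiInv_doubling ha₁ hδ₁ hφpos hφmono hφsurj hφscal hΦinv₁ hΦinv₂ he₁1 hWs
    have hgB : Real.sqrt (s / f s) = gfun f s := rfl
    rw [hgB, hsf]
    have hsg : s / gfun f s ≤ (c₂ * s) / Wfun f s := by
      rw [div_le_div_iff₀ hg hWs]
      nlinarith
    calc s / gfun f s * Φinv (gfun f s) ≤ ((c₂ * s) / Wfun f s) * (K₁ * Φinv (Wfun f s)) := by
          apply mul_le_mul hsg hd (phiInv_pos hφpos hφsurj hΦinv₁ hg).le (by positivity)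
    _ = (c₂ * K₁) * ((Φinv (Wfun f s) / Wfun f s) * s) := by field_simp
  constructor
  · intro H
    exact tendsto_top_of_le_mul (by positivity) hAB H
  · intro H
    exact tendsto_top_of_le_mul (by positivity) hBA H
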